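/- Let X ⊆ ℝ^m and let F = (X; f_1, …, f_N) be an IFS of continuous self-maps of X with a coding map π : {1,…,N}^∞ → X that is surjective onto X. Then F is point-fibred on X: for every σ ∈ {1,…,N}^∞ and every x ∈ X, lim_{k→∞} f_{σ_1}∘⋯∘f_{σ_k}(x) = π(σ). -/

import Mathlib

/-!
Every point of `X` is `π τ` for some code `τ`. The equivariance of `π` gives
`f_{σ 0} ∘ ⋯ ∘ f_{σ (k-1)} (π τ) = π (σ 0 ⋯ σ (k-1) τ)`, and these codes converge to `σ` in the
product topology because they agree with `σ` on the first `k` coordinates; continuity of `π` finishes.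
-/

/-- `ifsComp f σ k x = f_{σ 0} ∘ f_{σ 1} ∘ ⋯ ∘ f_{σ (k-1)} (x)`. -/
def ifsComp {E : Type*} {N : ℕ} (f : Fin N → E → E) (σ : ℕ → Fin N) : ℕ → E → E
  | 0, x => x
  | k + 1, x => ifsComp f σ k (f (σ k) x)

/-- The inverse shift `s_n`, prepending the symbol `n` to a sequence. -/
def prependSymbol {N : ℕ} (n : Fin N) (σ : ℕ → Fin N) : ℕ → Fin N
  | 0 => n
  | k + 1 => σ k

open Filter Topology

def appendCode {N : ℕ} (σ : ℕ → Fin N) (k : ℕ) (τ : ℕ → Fin N) : ℕ → Fin N :=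
  fun i => if i < k then σ i else τ (i - k)

section appendCode

variable {N : ℕ} (σ τ : ℕ → Fin N)

@[simp]
lemma appendCode_zero : appendCode σ 0 τ = τ := by
  funext i
  simp [appendCode]

lemma appendCode_prependSymbol (k : ℕ) :
    appendCode σ k (prependSymbol (σ k) τ) = appendCode σ (k + 1) τ := by
  funext i
  unfold appendCode
  split_ifs with hk hk1 hk1
  · rfl
  · omega
  · obtain rfl : i = k := by omega
    simp [prependSymbol]
  · obtain ⟨j, rfl⟩ : ∃ j, i = k + 1 + j := ⟨i - (k + 1), by omega⟩
    rw [show k + 1 + j - k = j + 1 by omega, Nat.add_sub_cancel_left, prependSymbol]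

lemma tendsto_appendCode : Tendsto (fun k => appendCode σ k τ) atTop (𝓝 σ) := by
  refine tendsto_pi_nhds.2 fun i => tendsto_const_nhds.congr' ?_
  filter_upwards [eventually_gt_atTop i] with k hk
  simp [appendCode, hk]

end appendCode

lemma ifsComp_apply_of_semiconj {E : Type*} {N : ℕ} {f : Fin N → E → E}
    {π : (ℕ → Fin N) → E} (hπ : ∀ n σ, f n (π σ) = π (prependSymbol n σ))
    (σ : ℕ → Fin N) (k : ℕ) (τ : ℕ → Fin N) :
    ifsComp f σ k (π τ) = π (appendCode σ k τ) := by
  induction k generalizing τ with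
  | zero => simp [ifsComp]
  | succ k ih => rw [ifsComp, hπ, ih, appendCode_prependSymbol]

theorem surjective_coding_map_implies_point_fibred (m N : ℕ)
    (X : Set (EuclideanSpace ℝ (Fin m)))
    (f : Fin N → EuclideanSpace ℝ (Fin m) → EuclideanSpace ℝ (Fin m))
    (π : (ℕ → Fin N) → EuclideanSpace ℝ (Fin m))
    (hπ_cont : Continuous π)
    (hπ_comm : ∀ (n : Fin N) (σ : ℕ → Fin N), f n (π σ) = π (prependSymbol n σ))
    (hπ_surj : Set.range π = X) :
    ∀ (σ : ℕ → Fin N), ∀ x ∈ X,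
      Filter.Tendsto (fun k => ifsComp f σ k x) Filter.atTop (nhds (π σ)) := by
  subst hπ_surj
  rintro σ _ ⟨τ, rfl⟩
  simp_rw [ifsComp_apply_of_semiconj hπ_comm]
  exact (hπ_cont.tendsto σ).comp (tendsto_appendCode σ τ)
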